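/- Let γₙ denote the standard Gaussian measure on ℝⁿ and let f : ℝⁿ → ℝ be Lipschitz with constant L₀ ≥ 0. Let ρ ≥ 0 and suppose x ↦ f(x) + (ρ/2)‖x‖² is convex. Then for every u > 0, the Gaussian smoothing f_u(x) = ∫ f(x + u·z) dγₙ(z) satisfies that x ↦ f_u(x) + (ρ/2)‖x‖² is convex; i.e. Gaussian smoothing preserves ρ-weak convexity. -/

import Mathlib

/-!
For each `z`, the map `x ↦ f (x + u • z) + ρ / 2 * ‖x‖ ^ 2` differs from the convex map
`x ↦ f (x + u • z) + ρ / 2 * ‖x + u • z‖ ^ 2` by a function affine in `x`, so it is convex.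
Averaging these maps over `z` against the probability measure `γₙ` keeps convexity; the integrals
are finite because `f` grows at most linearly and `γₙ` has a first moment.
-/

open MeasureTheory ProbabilityTheory

/-- The standard Gaussian measure on `ℝⁿ`. -/
noncomputable def stdGaussian (n : ℕ) : Measure (EuclideanSpace ℝ (Fin n)) :=
  Measure.map (MeasurableEquiv.toLp 2 (Fin n → ℝ)) (Measure.pi fun _ : Fin n => gaussianReal 0 1)

open Set

theorem convexOn_integral {E α : Type*} [AddCommGroup E] [Module ℝ E] [MeasurableSpace α]
    {μ : Measure α} {s : Set E} {g : E → α → ℝ} (hs : Convex ℝ s)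
    (hg : ∀ z, ConvexOn ℝ s fun x => g x z) (hint : ∀ x ∈ s, Integrable (g x) μ) :
    ConvexOn ℝ s fun x => ∫ z, g x z ∂μ := by
  refine ⟨hs, fun x hx y hy a b ha hb hab => ?_⟩
  have hax := (hint x hx).const_mul a
  have hby := (hint y hy).const_mul b
  calc ∫ z, g (a • x + b • y) z ∂μ ≤ ∫ z, (a * g x z + b * g y z) ∂μ :=
        integral_mono (hint _ (hs hx hy ha hb hab)) (hax.add hby)
          fun z => (hg z).2 hx hy ha hb hab
    _ = a • ∫ z, g x z ∂μ + b • ∫ z, g y z ∂μ := by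
        rw [integral_add hax hby, integral_const_mul, integral_const_mul, smul_eq_mul, smul_eq_mul]

theorem ConvexOn.translate_add_sq_norm {E : Type*} [NormedAddCommGroup E] [InnerProductSpace ℝ E]
    {f : E → ℝ} {ρ : ℝ} (hf : ConvexOn ℝ univ fun x => f x + ρ / 2 * ‖x‖ ^ 2) (c : E) :
    ConvexOn ℝ univ fun x => f (x + c) + ρ / 2 * ‖x‖ ^ 2 := by
  have htrans := hf.translate_right c
  rw [preimage_univ] at htrans
  -- `‖x + c‖ ^ 2 - ‖x‖ ^ 2 = 2 ⟪c, x⟫ + ‖c‖ ^ 2` is affine in `x`.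
  have hlin : ConvexOn ℝ univ ((-ρ) • innerₛₗ ℝ c) := LinearMap.convexOn _ convex_univ
  refine ((htrans.add hlin).add_const (-(ρ / 2) * ‖c‖ ^ 2)).congr fun x _ => ?_
  simp only [Function.comp_apply, Pi.add_apply, LinearMap.smul_apply, innerₛₗ_apply_apply,
    smul_eq_mul]
  rw [add_comm c x, norm_add_sq_real, real_inner_comm]
  ring

theorem LipschitzWith.integrable_comp {α E F : Type*} [MeasurableSpace α] {μ : Measure α}
    [IsFiniteMeasure μ] [NormedAddCommGroup E] [NormedAddCommGroup F] {K : NNReal} {g : E → F}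
    (hg : LipschitzWith K g) {φ : α → E} (hφ : Integrable φ μ) : Integrable (g ∘ φ) μ := by
  refine ((integrable_const ‖g 0‖).add (hφ.norm.const_mul K)).mono'
    (hg.continuous.comp_aestronglyMeasurable hφ.1) (ae_of_all _ fun z => ?_)
  have h := hg.norm_sub_le (φ z) 0
  rw [sub_zero] at h
  have := norm_le_insert' (g (φ z)) (g 0)
  simp only [Function.comp_apply, Pi.add_apply]
  linarith

theorem stmt5_general (n : ℕ) (f : EuclideanSpace ℝ (Fin n) → ℝ) (L₀ : ℝ)
    (hf : ∀ x y, |f x - f y| ≤ L₀ * ‖x - y‖) (ρ : ℝ)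
    (hconv : ConvexOn ℝ Set.univ (fun x => f x + ρ / 2 * ‖x‖ ^ 2)) (u : ℝ) :
    ConvexOn ℝ Set.univ
      (fun x => (∫ z, f (x + u • z) ∂(stdGaussian n)) + ρ / 2 * ‖x‖ ^ 2) := by
  rw [show _root_.stdGaussian n = ProbabilityTheory.stdGaussian _ from map_pi_eq_stdGaussian]
  have hlip : LipschitzWith (Real.toNNReal L₀) f :=
    .of_dist_le' fun x y => by
      simpa only [Real.dist_eq, dist_eq_norm, Real.norm_eq_abs] using hf x y
  have hint (x : EuclideanSpace ℝ (Fin n)) :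
      Integrable (fun z => f (x + u • z)) (ProbabilityTheory.stdGaussian _) :=
    hlip.integrable_comp ((integrable_const x).add (IsGaussian.integrable_id.smul u))
  have hsmooth : ConvexOn ℝ univ fun x =>
      ∫ z, (f (x + u • z) + ρ / 2 * ‖x‖ ^ 2) ∂(ProbabilityTheory.stdGaussian _) :=
    convexOn_integral convex_univ (fun z => hconv.translate_add_sq_norm (u • z))
      fun x _ => (hint x).add (integrable_const _)
  refine hsmooth.congr fun x _ => ?_
  simp [integral_add (hint x) (integrable_const _)]

/-- Gaussian smoothing preserves `ρ`-weak convexity: if `f` is `L₀`-Lipschitz and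
`x ↦ f x + (ρ/2)‖x‖²` is convex, then `x ↦ f_u x + (ρ/2)‖x‖²` is convex, where
`f_u x = ∫ f (x + u • z) dγₙ(z)`. -/
theorem stmt5 (n : ℕ) (f : EuclideanSpace ℝ (Fin n) → ℝ) (L₀ : ℝ) (hL₀ : 0 ≤ L₀)
    (hf : ∀ x y, |f x - f y| ≤ L₀ * ‖x - y‖) (ρ : ℝ) (hρ : 0 ≤ ρ)
    (hconv : ConvexOn ℝ Set.univ (fun x => f x + ρ / 2 * ‖x‖ ^ 2)) (u : ℝ) (hu : 0 < u) :
    ConvexOn ℝ Set.univ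
      (fun x => (∫ z, f (x + u • z) ∂(stdGaussian n)) + ρ / 2 * ‖x‖ ^ 2) :=
  stmt5_general n f L₀ hf ρ hconv u
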